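/- arXiv:1512.01031 — 3 statements merged into one kernel-verified Lean document; each statement's English description precedes it below -/
import Mathlib

section
/- For p > 1, the quantity π_p defined as 2∫₀¹ (1 - s^p)^{-1/p} ds equals 2π/(p·sin(π/p)). -/
/-!
Substituting `y = s ^ p` turns `p * ∫₀¹ (1 - s ^ p) ^ (-1/p) ds` into the Beta integral
`B(1/p, 1 - 1/p) = Γ(1/p) Γ(1 - 1/p)`, which Euler's reflection formula evaluates to `π / sin (π / p)`.
-/

open Real MeasureTheory

open Set

theorem intervalIntegral_rpow_mul_one_sub_rpow {u v : ℝ} (hu : 0 < u) (hv : 0 < v) :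
    ∫ x in (0:ℝ)..1, x ^ (u - 1) * (1 - x) ^ (v - 1) = Gamma u * Gamma v / Gamma (u + v) := by
  have hcpow : EqOn (fun x : ℝ => ((x ^ (u - 1) * (1 - x) ^ (v - 1) : ℝ) : ℂ))
      (fun x : ℝ => (x : ℂ) ^ ((u : ℂ) - 1) * (1 - (x : ℂ)) ^ ((v : ℂ) - 1)) (uIcc 0 1) := by
    intro x hx
    rw [uIcc_of_le zero_le_one] at hx
    push_cast [Complex.ofReal_cpow hx.1, Complex.ofReal_cpow (sub_nonneg.2 hx.2)]
    rfl
  apply Complex.ofReal_injective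
  rw [← intervalIntegral.integral_ofReal, intervalIntegral.integral_congr hcpow,
    ← Complex.betaIntegral, Complex.betaIntegral_eq_Gamma_mul_div _ _ (by simpa) (by simpa)]
  push_cast [← Complex.Gamma_ofReal]
  rfl

theorem intervalIntegral_rpow_mul_one_sub_rpow_neg {a : ℝ} (ha₀ : 0 < a) (ha₁ : a < 1) :
    ∫ x in (0:ℝ)..1, x ^ (a - 1) * (1 - x) ^ (-a) = π / sin (π * a) := by
  have := intervalIntegral_rpow_mul_one_sub_rpow ha₀ (sub_pos.2 ha₁)
  rwa [sub_sub_cancel_left, add_sub_cancel, Gamma_one, div_one, Gamma_mul_Gamma_one_sub] at this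

/-- Cutting off with the indicator of `Iic 1` reduces this to the substitution on `Ioi 0`
(`integral_comp_rpow_Ioi`), which needs no integrability hypothesis. -/
theorem intervalIntegral_comp_rpow_zero_one {E : Type*} [NormedAddCommGroup E] [NormedSpace ℝ E]
    (g : ℝ → E) {p : ℝ} (hp : 0 < p) :
    ∫ x in (0:ℝ)..1, (p * x ^ (p - 1)) • g (x ^ p) = ∫ y in (0:ℝ)..1, g y := by
  have hle : ∀ x ∈ Ioi (0:ℝ), x ^ p ≤ 1 ↔ x ≤ 1 := fun x hx => by
    simpa using rpow_le_rpow_iff (le_of_lt hx) zero_le_one hp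
  have hind : EqOn (fun x => (|p| * x ^ (p - 1)) • (Iic 1).indicator g (x ^ p))
      ((Iic 1).indicator fun x => (p * x ^ (p - 1)) • g (x ^ p)) (Ioi 0) := by
    intro x hx
    by_cases h : x ≤ 1
    · simp [indicator_of_mem, h, (hle x hx).2 h, abs_of_pos hp]
    · simp [indicator_of_notMem, h, mt (hle x hx).1 h]
  rw [intervalIntegral.integral_of_le zero_le_one, intervalIntegral.integral_of_le zero_le_one,
    ← Ioi_inter_Iic, ← setIntegral_indicator measurableSet_Iic,
    ← setIntegral_indicator measurableSet_Iic, ← setIntegral_congr_fun measurableSet_Ioi hind,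
    integral_comp_rpow_Ioi _ hp.ne']

theorem pi_p_eq (p : ℝ) (hp : 1 < p) :
    2 * ∫ s in (0:ℝ)..1, (1 - s ^ p) ^ (-1/p) =
      2 * Real.pi / (p * Real.sin (Real.pi / p)) := by
  have hp₀ : 0 < p := one_pos.trans hp
  have hcancel : ∀ s : ℝ, 0 < s → s ^ (p - 1) * (s ^ p) ^ (1 / p - 1) = 1 := fun s hs => by
    rw [← rpow_mul hs.le, ← rpow_add hs, mul_sub, mul_one_div_cancel hp₀.ne']
    simp
  have hsubst : p * ∫ s in (0:ℝ)..1, (1 - s ^ p) ^ (-1/p) =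
      ∫ s in (0:ℝ)..1, (p * s ^ (p - 1)) • ((s ^ p) ^ (1 / p - 1) * (1 - s ^ p) ^ (-(1 / p))) := by
    rw [← intervalIntegral.integral_const_mul]
    refine intervalIntegral.integral_congr_ae (.of_forall fun s hs => ?_)
    rw [uIoc_of_le zero_le_one] at hs
    rw [smul_eq_mul, neg_div]
    linear_combination -(p * (1 - s ^ p) ^ (-(1 / p))) * hcancel s hs.1
  have hbeta : p * ∫ s in (0:ℝ)..1, (1 - s ^ p) ^ (-1/p) = π / sin (π / p) := by
    rw [hsubst,
      intervalIntegral_comp_rpow_zero_one (fun y => y ^ (1 / p - 1) * (1 - y) ^ (-(1 / p))) hp₀,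
      ← mul_one_div π p, intervalIntegral_rpow_mul_one_sub_rpow_neg (by positivity) ((div_lt_one hp₀).2 hp)]
  have hsin : 0 < sin (π / p) :=
    sin_pos_of_pos_of_lt_pi (by positivity) (div_lt_self pi_pos hp)
  rw [eq_div_iff hsin.ne'] at hbeta
  rw [eq_div_iff (by positivity)]
  linear_combination 2 * hbeta
end

section
/- Lower bound for the A-Hessian norm: for a symmetric n×n matrix H, unit vector e = e₁ (first standard basis vector), and p ≥ 2, one has |H|_A² ≥ (p-1)² H₁₁² + 2(p-1) Σ_{k=2}^n H_{1k}² + (1/(n-1)) (Σ_{j=2}^n H_{jj})² whenever n ≥ 2. -/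
open Finset

/-! Expanding `A = I + (p - 2) e₀ e₀ᵀ` and splitting off the first row and column gives the exact
identity `|H|_A² = (p - 1)² H₀₀² + 2 (p - 1) ∑_{k ≠ 0} H₀ₖ² + ∑_{i, j ≠ 0} Hᵢⱼ²`. The last
block dominates the squares of its diagonal, which Cauchy–Schwarz bounds below by
`(∑_{j ≠ 0} Hⱼⱼ)² / (n - 1)`. -/

section
variable {ι R : Type*} [Fintype ι] [DecidableEq ι] [CommRing R]

theorem sum_weighted_eq_sum_sq_add (i₀ : ι) (c : R) (H A : Matrix ι ι R)
    (hA : ∀ i j, A i j = (if i = j then (1 : R) else 0) +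
      c * (if i = i₀ then (1 : R) else 0) * (if j = i₀ then (1 : R) else 0)) :
    ∑ i, ∑ j, ∑ k, ∑ l, A i k * A j l * H i j * H k l =
      ∑ i, ∑ j, H i j ^ 2 + c ^ 2 * H i₀ i₀ ^ 2 + c * ∑ k, (H i₀ k ^ 2 + H k i₀ ^ 2) := by
  simp only [hA, add_mul, mul_add, ite_mul, mul_ite, one_mul, mul_one, zero_mul, mul_zero,
    sum_add_distrib, sum_ite_eq, sum_ite_eq', mem_univ, if_true, sum_ite_irrel,
    sum_const_zero, mul_sum, sq, mul_assoc]
  ring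

theorem sum_sq_eq_corner_add_erase (i₀ : ι) (H : Matrix ι ι R) :
    ∑ i, ∑ j, H i j ^ 2 = H i₀ i₀ ^ 2 + ∑ k ∈ univ.erase i₀, (H i₀ k ^ 2 + H k i₀ ^ 2) +
      ∑ i ∈ univ.erase i₀, ∑ j ∈ univ.erase i₀, H i j ^ 2 := by
  simp only [← add_sum_erase univ _ (mem_univ i₀), sum_add_distrib]
  ring

theorem sum_weighted_eq_corner_add_block (i₀ : ι) (c : R) (H A : Matrix ι ι R)
    (hA : ∀ i j, A i j = (if i = j then (1 : R) else 0) +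
      c * (if i = i₀ then (1 : R) else 0) * (if j = i₀ then (1 : R) else 0)) :
    ∑ i, ∑ j, ∑ k, ∑ l, A i k * A j l * H i j * H k l =
      (c + 1) ^ 2 * H i₀ i₀ ^ 2 + (c + 1) * ∑ k ∈ univ.erase i₀, (H i₀ k ^ 2 + H k i₀ ^ 2) +
        ∑ i ∈ univ.erase i₀, ∑ j ∈ univ.erase i₀, H i j ^ 2 := by
  rw [sum_weighted_eq_sum_sq_add i₀ c H A hA, sum_sq_eq_corner_add_erase i₀,
    ← add_sum_erase univ _ (mem_univ i₀)]
  ring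

end

theorem sq_sum_diag_div_card_le_sum_sq {ι R : Type*} [Field R] [LinearOrder R]
    [IsStrictOrderedRing R] (s : Finset ι) (H : ι → ι → R) :
    (∑ i ∈ s, H i i) ^ 2 / #s ≤ ∑ i ∈ s, ∑ j ∈ s, H i j ^ 2 := by
  calc (∑ i ∈ s, H i i) ^ 2 / #s ≤ ∑ i ∈ s, H i i ^ 2 :=
        div_le_of_le_mul₀ (Nat.cast_nonneg _) (sum_nonneg fun _ _ ↦ sq_nonneg _)
          (mul_comm (#s : R) _ ▸ sq_sum_le_card_mul_sum_sq)
    _ ≤ ∑ i ∈ s, ∑ j ∈ s, H i j ^ 2 :=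
        sum_le_sum fun i hi ↦ single_le_sum (f := fun j ↦ H i j ^ 2) (fun _ _ ↦ sq_nonneg _) hi

theorem hessian_A_norm_lower_bound_general (n : ℕ) [NeZero n] (p : ℝ)
    (H : Matrix (Fin n) (Fin n) ℝ) (hH : H.IsSymm)
    (A : Matrix (Fin n) (Fin n) ℝ)
    (hA : ∀ i j, A i j = (if i = j then (1:ℝ) else 0) +
      (p - 2) * (if i = 0 then (1:ℝ) else 0) * (if j = 0 then (1:ℝ) else 0)) :
    ∑ i, ∑ j, ∑ k, ∑ l, A i k * A j l * H i j * H k l ≥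
      (p - 1) ^ 2 * H 0 0 ^ 2 +
        2 * (p - 1) * ∑ k ∈ Finset.univ.erase 0, H 0 k ^ 2 +
          (1 / ((n : ℝ) - 1)) * (∑ j ∈ Finset.univ.erase 0, H j j) ^ 2 := by
  have hcard : (#(univ.erase (0 : Fin n)) : ℝ) = n - 1 := by
    rw [card_erase_of_mem (mem_univ 0), card_univ, Fintype.card_fin,
      Nat.cast_sub NeZero.one_le, Nat.cast_one]
  have hdiag := sq_sum_diag_div_card_le_sum_sq (univ.erase (0 : Fin n)) H
  rw [ge_iff_le, one_div_mul_eq_div, ← hcard, sum_weighted_eq_corner_add_block 0 (p - 2) H A hA]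
  simp only [hH.apply, ← two_mul, ← mul_sum]
  linear_combination hdiag

theorem hessian_A_norm_lower_bound (n : ℕ) [NeZero n] (hn : 2 ≤ n) (p : ℝ) (hp : 2 ≤ p)
    (H : Matrix (Fin n) (Fin n) ℝ) (hH : H.IsSymm)
    (A : Matrix (Fin n) (Fin n) ℝ)
    (hA : ∀ i j, A i j = (if i = j then (1:ℝ) else 0) +
      (p - 2) * (if i = 0 then (1:ℝ) else 0) * (if j = 0 then (1:ℝ) else 0)) :
    ∑ i, ∑ j, ∑ k, ∑ l, A i k * A j l * H i j * H k l ≥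
      (p - 1) ^ 2 * H 0 0 ^ 2 +
        2 * (p - 1) * ∑ k ∈ Finset.univ.erase 0, H 0 k ^ 2 +
          (1 / ((n : ℝ) - 1)) * (∑ j ∈ Finset.univ.erase 0, H j j) ^ 2 :=
  hessian_A_norm_lower_bound_general n p H hH A hA
end

section
/- Monotone comparison integral bound: if u : [0,1] → ℝ is C¹ with u(0) = -a(1-ε) and u(1) = 1-ε for 0 < ε < 1 and 0 < a ≤ 1, and |u'(s)| ≤ L(1 - |u(s)|^p)^{1/p} for all s with some constant L > 0 and p > 1, then L ≥ ∫_{-a(1-ε)}^{1-ε} (1 - |v|^p)^{-1/p} dv. -/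
open Real MeasureTheory

theorem monotone_comparison_integral (p ε a L : ℝ) (hp : 1 < p) (hε0 : 0 < ε)
    (hε1 : ε < 1) (ha0 : 0 < a) (ha1 : a ≤ 1) (hL : 0 < L)
    (u u' : ℝ → ℝ)
    (hderiv : ∀ s ∈ Set.Icc (0:ℝ) 1, HasDerivWithinAt u (u' s) (Set.Icc 0 1) s)
    (hcont : ContinuousOn u' (Set.Icc 0 1))
    (hu0 : u 0 = -(a * (1 - ε))) (hu1 : u 1 = 1 - ε)
    (hbound : ∀ s ∈ Set.Icc (0:ℝ) 1, |u' s| ≤ L * (1 - |u s| ^ p) ^ (1 / p)) :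
    L ≥ ∫ v in (-(a * (1 - ε)))..(1 - ε), (1 - |v| ^ p) ^ (-1/p) := by
  set m : ℝ := 1 - ε with hm_def
  set c : ℝ := -(a * (1 - ε)) with hc_def
  have hm0 : 0 < m := by simp only [hm_def]; linarith
  have hm1 : m < 1 := by simp only [hm_def]; linarith
  have hcm : -m ≤ c := by
    simp only [hc_def, hm_def, neg_le_neg_iff]
    nlinarith
  have hc0 : c < 0 := by
    simp only [hc_def, neg_lt, neg_zero]
    nlinarith
  have hclm : c < m := lt_trans hc0 hm0
  have hp0 : (0:ℝ) < p := by linarith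
  have hu_cont : ContinuousOn u (Set.Icc 0 1) :=
    fun s hs => (hderiv s hs).continuousWithinAt
  -- the clamped integrand
  set g : ℝ → ℝ := fun v => (1 - |max (-m) (min v m)| ^ p) ^ (-1/p) with hg_def
  have habs_clamp : ∀ v : ℝ, |max (-m) (min v m)| ≤ m := by
    intro v
    rw [abs_le]
    constructor
    · exact le_max_left _ _
    · exact max_le (by linarith) (min_le_right _ _)
  have hkey : ∀ x : ℝ, |x| ≤ m → 0 < 1 - |x| ^ p := by
    intro x hx
    have h1 : |x| ^ p ≤ m ^ p := Real.rpow_le_rpow (abs_nonneg x) hx hp0.le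
    have h2 : m ^ p < 1 := Real.rpow_lt_one hm0.le hm1 hp0
    linarith
  have hg_cont : Continuous g := by
    apply Continuous.rpow_const
    · exact continuous_const.sub ((continuous_const.max
        ((continuous_id.min continuous_const))).abs.rpow_const
        (fun x => Or.inr hp0.le))
    · intro x
      exact Or.inl (ne_of_gt (hkey _ (habs_clamp x)))
  have hg_eq : ∀ v ∈ Set.Icc (-m) m, g v = (1 - |v| ^ p) ^ (-1/p) := by
    intro v hv
    have : max (-m) (min v m) = v := by
      rw [min_eq_left hv.2, max_eq_right hv.1]
    simp only [hg_def, this]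
  have hg_nonneg : ∀ v : ℝ, 0 ≤ g v := fun v =>
    Real.rpow_nonneg (le_of_lt (hkey _ (habs_clamp v))) _
  -- the first hitting time of m
  set S1 : Set ℝ := Set.Icc (0:ℝ) 1 ∩ u ⁻¹' {m} with hS1_def
  have hS1_closed : IsClosed S1 :=
    hu_cont.preimage_isClosed_of_isClosed isClosed_Icc isClosed_singleton
  have hS1_compact : IsCompact S1 :=
    isCompact_Icc.of_isClosed_subset hS1_closed Set.inter_subset_left
  have hS1_ne : S1.Nonempty := ⟨1, Set.mem_inter (by norm_num) (by simp [hu1])⟩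
  set σ1 : ℝ := sInf S1 with hσ1_def
  have hσ1_mem : σ1 ∈ S1 := hS1_compact.sInf_mem hS1_ne
  have hσ1_Icc : σ1 ∈ Set.Icc (0:ℝ) 1 := hσ1_mem.1
  have huσ1 : u σ1 = m := hσ1_mem.2
  have hlt : ∀ s ∈ Set.Icc (0:ℝ) 1, s < σ1 → u s < m := by
    intro s hs hsσ
    by_contra h
    push_neg at h
    rcases eq_or_lt_of_le h with heq | hgt
    · exact absurd (csInf_le hS1_compact.bddBelow
        (Set.mem_inter hs (by simp [heq.symm]))) (not_le.mpr hsσ)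
    · have hIcc : Set.Icc (0:ℝ) s ⊆ Set.Icc 0 1 :=
        Set.Icc_subset_Icc le_rfl hs.2
      have : m ∈ u '' Set.Icc 0 s := by
        apply intermediate_value_Icc hs.1 (hu_cont.mono hIcc)
        constructor
        · rw [hu0]; exact le_of_lt (lt_trans hc0 hm0)
        · exact hgt.le
      obtain ⟨t, ht, hut⟩ := this
      have ht1 : t ∈ S1 := Set.mem_inter (hIcc ht) (by simp [hut])
      have : σ1 ≤ t := csInf_le hS1_compact.bddBelow ht1
      linarith [ht.2]
  -- the last hitting time of c before σ1
  set S0 : Set ℝ := Set.Icc (0:ℝ) σ1 ∩ u ⁻¹' {c} with hS0_def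
  have hsub01 : Set.Icc (0:ℝ) σ1 ⊆ Set.Icc 0 1 := Set.Icc_subset_Icc le_rfl hσ1_Icc.2
  have hS0_closed : IsClosed S0 :=
    (hu_cont.mono hsub01).preimage_isClosed_of_isClosed isClosed_Icc isClosed_singleton
  have hS0_compact : IsCompact S0 :=
    isCompact_Icc.of_isClosed_subset hS0_closed Set.inter_subset_left
  have hσ1_pos : 0 ≤ σ1 := hσ1_Icc.1
  have hS0_ne : S0.Nonempty := ⟨0, Set.mem_inter (by simp [hσ1_pos]) (by simp [hu0])⟩
  set σ0 : ℝ := sSup S0 with hσ0_def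
  have hσ0_mem : σ0 ∈ S0 := hS0_compact.sSup_mem hS0_ne
  have huσ0 : u σ0 = c := hσ0_mem.2
  have hσ0_Icc : σ0 ∈ Set.Icc (0:ℝ) σ1 := hσ0_mem.1
  have hσ01 : σ0 ≤ σ1 := hσ0_Icc.2
  have hsub : Set.Icc σ0 σ1 ⊆ Set.Icc (0:ℝ) 1 :=
    Set.Icc_subset_Icc hσ0_Icc.1 hσ1_Icc.2
  have hgt : ∀ s, σ0 < s → s ≤ σ1 → c < u s := by
    intro s hσ0s hsσ1
    by_contra h
    push_neg at h
    rcases eq_or_lt_of_le h with heq | hlt'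
    · have : s ∈ S0 := Set.mem_inter ⟨le_trans hσ0_Icc.1 hσ0s.le, hsσ1⟩ (by simp [heq])
      exact absurd (le_csSup hS0_compact.bddAbove this) (not_le.mpr hσ0s)
    · have hIcc : Set.Icc s σ1 ⊆ Set.Icc (0:ℝ) 1 :=
        Set.Icc_subset_Icc (le_trans hσ0_Icc.1 hσ0s.le) hσ1_Icc.2
      have : c ∈ u '' Set.Icc s σ1 := by
        apply intermediate_value_Icc hsσ1 (hu_cont.mono hIcc)
        exact ⟨hlt'.le, by rw [huσ1]; linarith⟩
      obtain ⟨t, ht, hut⟩ := this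
      have ht0 : t ∈ S0 := Set.mem_inter ⟨le_trans (le_trans hσ0_Icc.1 hσ0s.le) ht.1, ht.2⟩
        (by simp [hut])
      have : t ≤ σ0 := le_csSup hS0_compact.bddAbove ht0
      linarith [ht.1]
  have hmem : ∀ s ∈ Set.Icc σ0 σ1, u s ∈ Set.Icc c m := by
    intro s hs
    constructor
    · rcases eq_or_lt_of_le hs.1 with heq | hlt'
      · rw [← heq, huσ0]
      · exact (hgt s hlt' hs.2).le
    · rcases eq_or_lt_of_le hs.2 with heq | hlt'
      · rw [heq, huσ1]
      · exact (hlt s (hsub hs) hlt').le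
  have hmem' : ∀ s ∈ Set.Icc σ0 σ1, |u s| ≤ m := by
    intro s hs
    have := hmem s hs
    rw [abs_le]
    exact ⟨le_trans hcm this.1, this.2⟩
  -- substitution
  have huIcc : Set.uIcc σ0 σ1 = Set.Icc σ0 σ1 := Set.uIcc_of_le hσ01
  have hsubst : (∫ s in σ0..σ1, u' s • (g ∘ u) s) = ∫ v in (u σ0)..(u σ1), g v := by
    apply intervalIntegral.integral_comp_smul_deriv''
    · rw [huIcc]; exact hu_cont.mono hsub
    · intro x hx
      rw [min_eq_left hσ01, max_eq_right hσ01] at hx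
      have hx01 : x ∈ Set.Ioo (0:ℝ) 1 :=
        ⟨lt_of_le_of_lt hσ0_Icc.1 hx.1, lt_of_lt_of_le hx.2 hσ1_Icc.2⟩
      exact ((hderiv x (Set.Ioo_subset_Icc_self hx01)).hasDerivAt
        (Icc_mem_nhds hx01.1 hx01.2)).hasDerivWithinAt
    · rw [huIcc]; exact hcont.mono hsub
    · exact hg_cont.continuousOn
  -- pointwise bound
  have hpt : ∀ s ∈ Set.Icc σ0 σ1, u' s • (g ∘ u) s ≤ L := by
    intro s hs
    have hus : |u s| ≤ m := hmem' s hs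
    have ht0 : 0 < 1 - |u s| ^ p := hkey _ hus
    have hgval : g (u s) = (1 - |u s| ^ p) ^ (-1/p) := by
      apply hg_eq
      exact ⟨neg_le_of_abs_le hus, le_of_abs_le hus⟩
    have hgn : 0 ≤ g (u s) := hg_nonneg _
    have h1 : u' s • (g ∘ u) s ≤ |u' s| * g (u s) := by
      simp only [smul_eq_mul, Function.comp_apply]
      exact mul_le_mul_of_nonneg_right (le_abs_self _) hgn
    have h2 : |u' s| * g (u s) ≤ (L * (1 - |u s| ^ p) ^ (1/p)) * g (u s) :=
      mul_le_mul_of_nonneg_right (hbound s (hsub hs)) hgn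
    have h3 : (L * (1 - |u s| ^ p) ^ (1/p)) * g (u s) = L := by
      have hz : (1:ℝ)/p + -1/p = 0 := by ring
      rw [hgval, mul_assoc, ← Real.rpow_add ht0, hz, Real.rpow_zero, mul_one]
    linarith
  -- integral bound
  have hcont_int : ContinuousOn (fun s => u' s • (g ∘ u) s) (Set.Icc σ0 σ1) := by
    apply ContinuousOn.smul (hcont.mono hsub)
    exact hg_cont.comp_continuousOn (hu_cont.mono hsub)
  have hii : IntervalIntegrable (fun s => u' s • (g ∘ u) s) volume σ0 σ1 := by
    apply ContinuousOn.intervalIntegrable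
    rw [huIcc]; exact hcont_int
  have hmono : (∫ s in σ0..σ1, u' s • (g ∘ u) s) ≤ ∫ _ in σ0..σ1, L :=
    intervalIntegral.integral_mono_on hσ01 hii intervalIntegrable_const hpt
  have hconst : (∫ _ in σ0..σ1, L) = (σ1 - σ0) * L := by
    rw [intervalIntegral.integral_const, smul_eq_mul]
  have hfinal : (∫ s in σ0..σ1, u' s • (g ∘ u) s) ≤ L := by
    apply le_trans hmono
    rw [hconst]
    nlinarith [hσ0_Icc.1, hσ1_Icc.2]
  -- identify the target integral
  have htarget : (∫ v in c..m, (1 - |v| ^ p) ^ (-1/p)) = ∫ v in c..m, g v := by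
    apply intervalIntegral.integral_congr
    intro v hv
    rw [Set.uIcc_of_le hclm.le] at hv
    exact (hg_eq v ⟨le_trans hcm hv.1, hv.2⟩).symm
  rw [ge_iff_le, htarget]
  calc (∫ v in c..m, g v) = ∫ v in (u σ0)..(u σ1), g v := by rw [huσ0, huσ1]
    _ = ∫ s in σ0..σ1, u' s • (g ∘ u) s := hsubst.symm
    _ ≤ L := hfinal
end
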